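/- arXiv:1111.5604 — 4 statements merged into one kernel-verified Lean document; each statement's English description precedes it below -/
import Mathlib

section
/- Let Σ be a finite totally ordered alphabet, let q ≥ 2 be a natural number, and let u be a uniformly recurrent right infinite word over Σ. If for some natural number N the word u has at least q distinct subwords of length N, then u contains a strongly q-decomposable finite subword. -/
/-- Degree-lexicographic order on words: compare first by length, then lexicographically. -/
def DegLexLT {α : Type*} [LinearOrder α] (v w : List α) : Prop :=
  v.length < w.length ∨ (v.length = w.length ∧ List.Lex (· < ·) v w)

/-- `w` is strongly `q`-decomposable: `w = w_1 ⋯ w_q` with all `w_i` nonempty,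
`w ≻ w_{σ(1)} ⋯ w_{σ(q)}` in degree-lex order for every non-identity permutation `σ`,
and `(q - 1) * length(w_i) < length(w)` for every `i`. -/
def IsStronglyQDecomp {α : Type*} [LinearOrder α] (q : ℕ) (w : List α) : Prop :=
  ∃ f : Fin q → List α, (∀ i, f i ≠ []) ∧ w = (List.ofFn f).flatten ∧
    (∀ σ : Equiv.Perm (Fin q), σ ≠ 1 → DegLexLT ((List.ofFn (f ∘ ⇑σ)).flatten) w) ∧
    ∀ i, (q - 1) * (f i).length < w.length

/-- The finite block of `u` of length `n` starting at position `i`. -/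
def SubwordAt {α : Type*} (u : ℕ → α) (i n : ℕ) : List α :=
  (List.range n).map fun j => u (i + j)

/-- `v` is a finite subword (factor) of the right infinite word `u`. -/
def IsFactorOf {α : Type*} (u : ℕ → α) (v : List α) : Prop :=
  ∃ i : ℕ, v = SubwordAt u i v.length

/-- `u` is uniformly recurrent: every subword `v` of `u` occurs in every block
`u(i) u(i+1) ⋯ u(i+N)` for some `N` depending only on `v`. -/
def UniformlyRecurrent {α : Type*} (u : ℕ → α) : Prop :=
  ∀ v : List α, IsFactorOf u v → ∃ N : ℕ, ∀ i : ℕ, v <:+: SubwordAt u i (N + 1)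

/-!
Pick `q` distinct factors `T 0 > T 1 > ⋯ > T (q-1)` of length `N`. By uniform recurrence they all
occur in every window of some fixed length `K`, so with `L = (q + 1) K + N + 1` there is an
occurrence of `T k` starting at some `b k ∈ [k L, k L + K]`. Cutting `u[b 0, q L)` at these points
gives `q` pieces of length in `[L - K, L + K]`, the `k`-th one starting with `T k`. A non-identity
permutation of the pieces first moves some index `i` to a larger one, so at the start of the
`i`-th piece it reads `T (π i) < T i` where the original word reads `T i`: the permuted word has
the same length and is lexicographically smaller. Since `q K < L`, every piece is shorter than
a `1/(q-1)` fraction of the whole word.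
-/

section Subwords

variable {α : Type*} (u : ℕ → α)

@[simp]
theorem length_subwordAt (i n : ℕ) : (SubwordAt u i n).length = n := by
  simp [SubwordAt]

theorem subwordAt_append (i m n : ℕ) :
    SubwordAt u i m ++ SubwordAt u (i + m) n = SubwordAt u i (m + n) := by
  simp [SubwordAt, List.range_add, add_assoc]

theorem subwordAt_prefix {m n : ℕ} (h : m ≤ n) (i : ℕ) : SubwordAt u i m <+: SubwordAt u i n := by
  refine ⟨SubwordAt u (i + m) (n - m), ?_⟩
  rw [subwordAt_append, Nat.add_sub_cancel' h]

theorem exists_eq_subwordAt_of_infix {v : List α} {i n : ℕ} (h : v <:+: SubwordAt u i n) :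
    ∃ p, i ≤ p ∧ p + v.length ≤ i + n ∧ SubwordAt u p v.length = v := by
  obtain ⟨s, t, hst⟩ := h
  have hn : s.length + v.length + t.length = n := by
    simpa [Nat.add_assoc] using congrArg List.length hst
  refine ⟨i + s.length, by omega, by omega, ?_⟩
  rw [← hn, ← subwordAt_append, ← subwordAt_append] at hst
  exact ((List.append_inj (List.append_inj hst (by simp)).1 (by simp)).2).symm

theorem flatten_ofFn_subwordAt {b : ℕ → ℕ} (hb : Monotone b) (n : ℕ) :
    (List.ofFn fun k : Fin n => SubwordAt u (b k) (b (k + 1) - b k)).flatten =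
      SubwordAt u (b 0) (b n - b 0) := by
  induction n with
  | zero => simp [SubwordAt]
  | succ n ih =>
    rw [List.ofFn_succ', List.concat_eq_append, List.flatten_concat]
    simp only [Fin.val_castSucc, Fin.val_last, ih]
    have h0 := hb (Nat.zero_le n)
    have h1 := hb (Nat.le_add_right n 1)
    rw [show b (n + 1) - b 0 = b n - b 0 + (b (n + 1) - b n) by omega, ← subwordAt_append,
      Nat.add_sub_cancel' h0]

variable {u} in
theorem UniformlyRecurrent.exists_forall_infix_subwordAt (hu : UniformlyRecurrent u)
    (S : Finset (List α)) (hS : ∀ v ∈ S, IsFactorOf u v) :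
    ∃ K, ∀ v ∈ S, ∀ i, v <:+: SubwordAt u i K := by
  choose! R hR using fun v hv => hu v (hS v hv)
  refine ⟨S.sup R + 1, fun v hv i => (hR v hv i).trans (subwordAt_prefix u ?_ i).isInfix⟩
  have := Finset.le_sup (f := R) hv
  omega

end Subwords

theorem List.Lex.append_of_length_eq {α : Type*} {r : α → α → Prop} {x y : List α}
    (h : List.Lex r x y) (hlen : x.length = y.length) (a b : List α) :
    List.Lex r (x ++ a) (y ++ b) := by
  induction h with
  | nil => simp at hlen
  | cons _ ih => exact .cons (ih (by simpa using hlen))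
  | rel h => exact .rel h

theorem lex_flatten_ofFn {α : Type*} {r : α → α → Prop} :
    ∀ {n : ℕ} {g f : Fin n → List α} {i : Fin n}, (∀ m < i, g m = f m) →
      (∀ a b, List.Lex r (g i ++ a) (f i ++ b)) →
      List.Lex r (List.ofFn g).flatten (List.ofFn f).flatten
  | 0, _, _, i, _, _ => i.elim0
  | n + 1, g, f, i, heq, hi => by
    rw [List.ofFn_succ, List.ofFn_succ, List.flatten_cons, List.flatten_cons]
    cases i using Fin.cases with
    | zero => exact hi _ _
    | succ j =>
      rw [heq 0 j.succ_pos]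
      exact .append_left r
        (lex_flatten_ofFn (fun m hm => heq m.succ (Fin.succ_lt_succ_iff.2 hm)) hi) _

theorem Equiv.Perm.exists_lt_apply_of_ne_one {ι : Type*} [LinearOrder ι] [Fintype ι]
    {π : Equiv.Perm ι} (hπ : π ≠ 1) : ∃ i, i < π i ∧ ∀ j < i, π j = j := by
  classical
  have hne : π.support.Nonempty :=
    Finset.nonempty_iff_ne_empty.2 (mt Equiv.Perm.support_eq_empty_iff.1 hπ)
  have hmoved : π (π.support.min' hne) ≠ π.support.min' hne :=
    Equiv.Perm.mem_support.1 (π.support.min'_mem hne)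
  have hfix : ∀ j < π.support.min' hne, π j = j := fun j hj =>
    not_not.1 fun hj' => (π.support.min'_le j (Equiv.Perm.mem_support.2 hj')).not_gt hj
  refine ⟨_, lt_of_le_of_ne (le_of_not_gt fun hlt => hmoved ?_) hmoved.symm, hfix⟩
  exact π.injective (hfix _ hlt)

theorem length_flatten_ofFn_comp_perm {α : Type*} {n : ℕ} (f : Fin n → List α)
    (π : Equiv.Perm (Fin n)) :
    (List.ofFn (f ∘ π)).flatten.length = (List.ofFn f).flatten.length := by
  simp only [List.length_flatten, List.map_ofFn, List.sum_ofFn]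
  exact Equiv.sum_comp π (fun k => (f k).length)

theorem degLexLT_flatten_ofFn_comp_perm {α : Type*} [LinearOrder α] {q : ℕ} {f T : Fin q → List α}
    (hT : StrictAnti T) (hlen : ∀ k l, (T k).length = (T l).length) (hpre : ∀ k, T k <+: f k)
    {π : Equiv.Perm (Fin q)} (hπ : π ≠ 1) :
    DegLexLT (List.ofFn (f ∘ π)).flatten (List.ofFn f).flatten := by
  obtain ⟨i, hi, hfix⟩ := π.exists_lt_apply_of_ne_one hπ
  refine Or.inr ⟨length_flatten_ofFn_comp_perm f π,
    lex_flatten_ofFn (fun m hm => congrArg f (hfix m hm)) fun a b => ?_⟩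
  obtain ⟨s, hs⟩ := hpre (π i)
  obtain ⟨t, ht⟩ := hpre i
  rw [Function.comp_apply, ← hs, ← ht, List.append_assoc, List.append_assoc]
  exact (List.lex_lt.2 (hT hi)).append_of_length_eq (hlen _ _) _ _

theorem sub_one_mul_lt_of_le {q K L d W : ℕ} (hq : 1 ≤ q) (hL : q * K < L) (hd : d ≤ L + K)
    (hW : q * L ≤ W + K) : (q - 1) * d < W := by
  obtain ⟨r, rfl⟩ : ∃ r, q = r + 1 := ⟨q - 1, by omega⟩
  have := Nat.mul_le_mul_left r hd
  rw [Nat.add_sub_cancel]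
  nlinarith

theorem isStronglyQDecomp_subwordAt {α : Type*} [LinearOrder α] (u : ℕ → α) {q N K L : ℕ}
    (hL : (q + 1) * K + N < L) {T : Fin q → List α} (hT : StrictAnti T)
    (hlen : ∀ k, (T k).length = N) {b : ℕ → ℕ} (hb : ∀ k, k * L ≤ b k ∧ b k ≤ k * L + K)
    (hocc : ∀ k : Fin q, SubwordAt u (b k) N = T k) :
    IsStronglyQDecomp q (SubwordAt u (b 0) (b q - b 0)) := by
  have hgap : ∀ k, L - K ≤ b (k + 1) - b k ∧ b (k + 1) - b k ≤ L + K := fun k => by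
    have := hb k
    have := hb (k + 1)
    rw [Nat.succ_mul] at this
    omega
  have hKL : K + N < L := by nlinarith
  have hmono : Monotone b := monotone_nat_of_le_succ fun k => by have := hgap k; omega
  have hflat := flatten_ofFn_subwordAt u hmono q
  have hpre : ∀ k : Fin q, T k <+: SubwordAt u (b k) (b (k + 1) - b k) := fun k =>
    hocc k ▸ subwordAt_prefix u (by have := hgap k; omega) _
  refine ⟨_, fun k => List.ne_nil_of_length_pos ?_, hflat.symm,
    fun π hπ => hflat ▸ degLexLT_flatten_ofFn_comp_perm hT (by simp [hlen]) hpre hπ, fun k => ?_⟩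
  · have := hgap k
    simp only [length_subwordAt]
    omega
  · have hb0 := hb 0
    have hbq := hb q
    simp only [length_subwordAt]
    exact sub_one_mul_lt_of_le k.pos (by nlinarith) (hgap k).2 (by simp at hb0; omega)

theorem uniformlyRecurrent_contains_strongly_decomposable_general
    {σ : Type*} [LinearOrder σ]
    (q : ℕ) (u : ℕ → σ) (hu : UniformlyRecurrent u)
    (N : ℕ) (S : Finset (List σ)) (hcard : q ≤ S.card)
    (hS : ∀ v ∈ S, v.length = N ∧ IsFactorOf u v) :
    ∃ v : List σ, IsFactorOf u v ∧ IsStronglyQDecomp q v := by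
  obtain ⟨S', hS'S, hS'card⟩ := Finset.exists_subset_card_eq hcard
  obtain ⟨K, hK⟩ := hu.exists_forall_infix_subwordAt S' fun v hv => (hS v (hS'S hv)).2
  let T : Fin q → List σ := S'.orderEmbOfFin hS'card ∘ Fin.rev
  have hTS' : ∀ k, T k ∈ S' := fun k => S'.orderEmbOfFin_mem hS'card _
  have hTlen : ∀ k, (T k).length = N := fun k => (hS _ (hS'S (hTS' k))).1
  let L := (q + 1) * K + N + 1
  have hocc : ∀ k : Fin q, ∃ p, k * L ≤ p ∧ p ≤ k * L + K ∧ SubwordAt u p N = T k := fun k => by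
    obtain ⟨p, hp₁, hp₂, hp⟩ := exists_eq_subwordAt_of_infix u (hK _ (hTS' k) (k * L))
    exact ⟨p, hp₁, by omega, hTlen k ▸ hp⟩
  choose p hp using hocc
  let b : ℕ → ℕ := fun k => if h : k < q then p ⟨k, h⟩ else k * L
  have hb : ∀ k, k * L ≤ b k ∧ b k ≤ k * L + K := fun k => by
    by_cases h : k < q
    · simpa [b, h] using And.intro (hp ⟨k, h⟩).1 (hp ⟨k, h⟩).2.1
    · simp [b, h]
  refine ⟨_, ⟨b 0, by simp⟩, isStronglyQDecomp_subwordAt u (by omega)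
    ((S'.orderEmbOfFin hS'card).strictMono.comp_strictAnti Fin.rev_strictAnti) hTlen hb
    fun k => by simp only [b, dif_pos k.isLt, Fin.eta]; exact (hp k).2.2⟩

/-- If a uniformly recurrent right infinite word `u` over a finite ordered alphabet has
at least `q ≥ 2` distinct subwords of some length `N`, then `u` contains a strongly
`q`-decomposable finite subword. -/
theorem uniformlyRecurrent_contains_strongly_decomposable
    {σ : Type*} [Fintype σ] [LinearOrder σ]
    (q : ℕ) (hq : 2 ≤ q) (u : ℕ → σ) (hu : UniformlyRecurrent u)
    (N : ℕ) (S : Finset (List σ)) (hcard : q ≤ S.card)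
    (hS : ∀ v ∈ S, v.length = N ∧ IsFactorOf u v) :
    ∃ v : List σ, IsFactorOf u v ∧ IsStronglyQDecomp q v :=
  uniformlyRecurrent_contains_strongly_decomposable_general q u hu N S hcard hS
end

section
/- Let R be an associative (not necessarily commutative) ring, let d ≥ 1 be a natural number, and let a_1, …, a_d ∈ R. Then ∑_{S ⊆ {1, …, d}} (−1)^{d−|S|} (∑_{i ∈ S} a_i)^d = ∑_{σ ∈ S_d} a_{σ(1)} a_{σ(2)} ⋯ a_{σ(d)}, where the outer sum on the left runs over all subsets S of {1, …, d} (with the empty sum equal to 0) and the sum on the right runs over all permutations σ of {1, …, d}. -/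
/-!
Expanding `(∑ i ∈ S, a i) ^ n` without commuting anything gives the sum of the words
`a (x 0) ⋯ a (x (n - 1))` over all `x : Fin n → S`. The words over `S` are those avoiding every
letter outside `S`, so by inclusion–exclusion the alternating sum over `S` keeps exactly the words
that use every letter. Over `d` letters, the surjective words of length `d` are the permutations.
-/

open Finset

theorem List.prod_ofFn_sum {R ι : Type*} [Semiring R] {n : ℕ} (t : Fin n → Finset ι)
    (f : Fin n → ι → R) :
    (List.ofFn fun k => ∑ i ∈ t k, f k i).prod
      = ∑ x ∈ Fintype.piFinset t, (List.ofFn fun k => f k (x k)).prod := by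
  induction n with
  | zero => simp
  | succ n ih =>
    rw [List.ofFn_succ, List.prod_cons, ih, sum_mul_sum, ← sum_product']
    refine sum_nbij' (fun p => Fin.cons p.1 p.2) (fun x => (x 0, Fin.tail x)) ?_ ?_ ?_ ?_ ?_
    · rintro ⟨i, x⟩ h
      rw [Fin.mem_piFinset_iff_zero_tail]
      simpa [Fin.tail] using h
    · intro x h
      rw [Fin.mem_piFinset_iff_zero_tail] at h
      simpa [Fin.tail] using h
    · rintro ⟨i, x⟩ -
      simp
    · rintro x -
      simp
    · rintro ⟨i, x⟩ -
      simp [List.ofFn_succ]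

theorem Finset.sum_pow_eq_sum_piFinset_prod {R ι : Type*} [Semiring R] (s : Finset ι)
    (a : ι → R) (n : ℕ) :
    (∑ i ∈ s, a i) ^ n
      = ∑ x ∈ Fintype.piFinset fun _ : Fin n => s, (List.ofFn (a ∘ x)).prod := by
  simpa [Function.comp_def] using List.prod_ofFn_sum (fun _ : Fin n => s) (fun _ => a)

theorem Finset.sum_powerset_neg_one_pow_mul_sum_pow_eq_sum_surjective {R ι : Type*} [Ring R]
    [Fintype ι] [DecidableEq ι] (a : ι → R) (n : ℕ) :
    ∑ S ∈ (univ : Finset ι).powerset,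
        (-1 : R) ^ (Fintype.card ι - #S) * (∑ i ∈ S, a i) ^ n
      = ∑ x : Fin n → ι with Function.Surjective x, (List.ofFn (a ∘ x)).prod := by
  have inf_compl_eq : (univ.inf fun i => ({x | ∀ k, x k ≠ i} : Finset (Fin n → ι))ᶜ)
      = ({x | Function.Surjective x} : Finset (Fin n → ι)) := by
    ext x
    simp only [Finset.mem_inf, mem_univ, mem_compl, mem_filter, true_and, not_forall, not_not,
      forall_const]
    exact Iff.rfl
  have inf_eq (T : Finset ι) : T.inf (fun i => ({x | ∀ k, x k ≠ i} : Finset (Fin n → ι)))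
      = Fintype.piFinset fun _ => Tᶜ := by
    ext x
    simp only [Finset.mem_inf, mem_filter, mem_univ, true_and, Fintype.mem_piFinset, mem_compl]
    exact ⟨fun h k hk => h _ hk k rfl, fun h i hi k hk => h k (hk ▸ hi)⟩
  rw [← inf_compl_eq, inclusion_exclusion_sum_inf_compl, powerset_univ]
  simp only [inf_eq, ← sum_pow_eq_sum_piFinset_prod]
  rw [← Equiv.sum_comp (compl_involutive.toPerm _)]
  refine sum_congr rfl fun T _ => ?_
  simp [card_compl, Nat.sub_sub_self (card_le_univ T)]

theorem Fintype.sum_surjective_eq_sum_perm {α M : Type*} [Fintype α] [DecidableEq α]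
    [AddCommMonoid M] (g : (α → α) → M) :
    ∑ f : α → α with Function.Surjective f, g f = ∑ σ : Equiv.Perm α, g σ := by
  rw [← Fintype.sum_equiv Equiv.bijectiveEquiv (fun f => g f) (fun σ => g σ) (fun _ => rfl),
    ← Finset.sum_subtype]
  simp [Finite.surjective_iff_bijective]

theorem sum_subsets_neg_one_pow_mul_sum_pow_eq_sum_perm_prod_general
    {R : Type*} [Ring R] (d : ℕ) (a : Fin d → R) :
    ∑ S ∈ (Finset.univ : Finset (Fin d)).powerset,
        (-1 : R) ^ (d - S.card) * (∑ i ∈ S, a i) ^ d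
      = ∑ σ : Equiv.Perm (Fin d), (List.ofFn (a ∘ ⇑σ)).prod := by
  rw [← Fintype.sum_surjective_eq_sum_perm (fun x => (List.ofFn (a ∘ x)).prod),
    ← sum_powerset_neg_one_pow_mul_sum_pow_eq_sum_surjective, Fintype.card_fin]

/-- In any associative ring, for `d ≥ 1` and elements `a_1, …, a_d`,
`∑_{S ⊆ {1,…,d}} (−1)^{d−|S|} (∑_{i ∈ S} a_i)^d = ∑_{σ ∈ S_d} a_{σ(1)} ⋯ a_{σ(d)}`. -/
theorem sum_subsets_neg_one_pow_mul_sum_pow_eq_sum_perm_prod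
    {R : Type*} [Ring R] (d : ℕ) (hd : 1 ≤ d) (a : Fin d → R) :
    ∑ S ∈ (Finset.univ : Finset (Fin d)).powerset,
        (-1 : R) ^ (d - S.card) * (∑ i ∈ S, a i) ^ d
      = ∑ σ : Equiv.Perm (Fin d), (List.ofFn (a ∘ ⇑σ)).prod :=
  sum_subsets_neg_one_pow_mul_sum_pow_eq_sum_perm_prod_general d a
end

section
/- Let D be a division ring with center k such that the dimension of D over k is n^2, and let x ∈ D be an element such that 1, x, …, x^{n-1} are linearly independent over k and the subfield k(x) generated by k and x is a maximal subfield of D. If c_0, …, c_{n-1} ∈ D satisfy ∑_{i=0}^{n-1} c_i α x^i = 0 for every α ∈ D, then c_0 = c_1 = ⋯ = c_{n-1} = 0. -/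
/-- A (not necessarily central) subfield of a division ring `D`: a subring that is
commutative and closed under inverses. -/
def IsCommSubfield {D : Type*} [DivisionRing D] (K : Subring D) : Prop :=
  (∀ x ∈ K, ∀ y ∈ K, x * y = y * x) ∧ ∀ x ∈ K, x⁻¹ ∈ K

/-!
A family `c` with `∑ cᵢ α vᵢ = 0` for all `α` can be multiplied on the left by any element of
`D`, and the commutators `d cᵢ - cᵢ d` again form such a family. Normalising one nonzero
coefficient to `1` makes the commutator family vanish at that index, so by induction on the
support all commutators vanish: the normalised coefficients are central. Taking `α = 1` then
contradicts the linear independence of the `vᵢ` over the center.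
-/

namespace LinearIndependent

variable {D ι : Type*} [DivisionRing D] [Fintype ι] {v c : ι → D}

theorem eq_zero_of_sum_mul_eq_zero_of_mem_center
    (hv : LinearIndependent (Subring.center D) v) (hcent : ∀ i, c i ∈ Subring.center D)
    (hsum : ∑ i, c i * v i = 0) : c = 0 := by
  have hzero := Fintype.linearIndependent_iff.mp hv (fun i => ⟨c i, hcent i⟩) hsum
  exact funext fun i => congrArg Subtype.val (hzero i)

theorem sum_mul_mul_eq_zero_left_mul (hc : ∀ α, ∑ i, c i * α * v i = 0) (a α : D) :
    ∑ i, a * c i * α * v i = 0 := calc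
  ∑ i, a * c i * α * v i = a * ∑ i, c i * α * v i := by simp only [Finset.mul_sum, mul_assoc]
  _ = 0 := by rw [hc α, mul_zero]

theorem sum_commutator_mul_mul_eq_zero (hc : ∀ α, ∑ i, c i * α * v i = 0) (d α : D) :
    ∑ i, (d * c i - c i * d) * α * v i = 0 := calc
  ∑ i, (d * c i - c i * d) * α * v i
      = ∑ i, d * c i * α * v i - ∑ i, c i * (d * α) * v i := by
    simp only [sub_mul, Finset.sum_sub_distrib, mul_assoc]
  _ = 0 := by rw [sum_mul_mul_eq_zero_left_mul hc, hc, sub_zero]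

theorem eq_zero_of_forall_sum_mul_mul_eq_zero (hv : LinearIndependent (Subring.center D) v)
    (hc : ∀ α, ∑ i, c i * α * v i = 0) : c = 0 := by
  classical
  suffices key : ∀ s : Finset ι, ∀ c : ι → D, (∀ i ∉ s, c i = 0) →
      (∀ α, ∑ i, c i * α * v i = 0) → c = 0 from
    key Finset.univ c (by simp) hc
  intro s
  induction s using Finset.strongInduction with
  | H s ih =>
    intro c hsupp hc
    by_contra hne
    obtain ⟨i, hi⟩ := Function.ne_iff.mp hne
    have his : i ∈ s := by_contra fun h => hi (hsupp i h)
    set c' : ι → D := fun j => (c i)⁻¹ * c j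
    have hc' : ∀ α, ∑ j, c' j * α * v j = 0 := sum_mul_mul_eq_zero_left_mul hc _
    have hc'i : c' i = 1 := inv_mul_cancel₀ hi
    have hcent : ∀ j, c' j ∈ Subring.center D := by
      intro j
      refine Subring.mem_center_iff.mpr fun d => ?_
      have hsupp' : ∀ k ∉ s.erase i, d * c' k - c' k * d = 0 := by
        intro k hk
        rcases eq_or_ne k i with rfl | hki
        · simp [hc'i]
        · simp [c', hsupp k (by simpa [hki] using hk)]
      have hcomm := ih _ (Finset.erase_ssubset his) _ hsupp' (sum_commutator_mul_mul_eq_zero hc' d)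
      exact sub_eq_zero.mp (congrFun hcomm j)
    have hzero := eq_zero_of_sum_mul_eq_zero_of_mem_center hv hcent (by simpa using hc' 1)
    exact one_ne_zero (hc'i.symm.trans (congrFun hzero i))

end LinearIndependent

theorem operators_linearly_independent_general
    (D : Type*) [DivisionRing D] (n : ℕ)
    (x : D)
    (hind : LinearIndependent (Subring.center D) fun i : Fin n => x ^ (i : ℕ))
    (c : Fin n → D)
    (hc : ∀ α : D, ∑ i : Fin n, c i * α * x ^ (i : ℕ) = 0) :
    ∀ i, c i = 0 :=
  congrFun (hind.eq_zero_of_forall_sum_mul_mul_eq_zero hc)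

/-- Let `D` be a division ring with center `k`, `dim_k D = n ^ 2`, and let `x ∈ D` be such
that `1, x, …, x^{n-1}` are linearly independent over `k` and the subfield `k(x)` (the
smallest subfield containing `k` and `x`) is a maximal subfield of `D`. If
`c_0, …, c_{n-1} ∈ D` satisfy `∑ c_i α x^i = 0` for every `α ∈ D`, then all `c_i = 0`. -/
theorem operators_linearly_independent
    (D : Type*) [DivisionRing D] (n : ℕ)
    (hdim : Module.rank (Subring.center D) D = ((n ^ 2 : ℕ) : Cardinal))
    (x : D)
    (hind : LinearIndependent (Subring.center D) fun i : Fin n => x ^ (i : ℕ))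
    (L : Subring D) (hL : IsCommSubfield L)
    (hxL : x ∈ L) (hkL : Subring.center D ≤ L)
    (hleast : ∀ M : Subring D, IsCommSubfield M → Subring.center D ≤ M → x ∈ M → L ≤ M)
    (hmax : ∀ M : Subring D, IsCommSubfield M → L ≤ M → M = L)
    (c : Fin n → D)
    (hc : ∀ α : D, ∑ i : Fin n, c i * α * x ^ (i : ℕ) = 0) :
    ∀ i, c i = 0 :=
  operators_linearly_independent_general D n x hind c hc
end

section
/- Let D be a division ring whose center is K and suppose that the dimension of D as a K-vector space is d^2. Then every element of D is algebraic over K of degree at most d; that is, for every x ∈ D there exists a nonzero polynomial over K of degree at most d that vanishes at x. -/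
/-!
Let `m` be the degree of `x` over `K` and `C` the centralizer of `x`, a division ring containing
the powers `1, x, …, x^(m-1)`, so `m ≤ dim_K C`. By the Artin–Whaples independence argument the
maps `u ↦ x^i * u * b` (`b` running over a `K`-basis of `D`) are `K`-independent; they are
`C`-linear for the left action of `C`, and `Hom_C(D, D)` has `K`-dimension `dim_C D * dim_K D`,
so `m ≤ dim_C D`. Hence `m² ≤ dim_K C * dim_C D = d²`.
-/

open Module Finset

instance Subring.center.instIsCentral (R : Type*) [Ring R] :
    Algebra.IsCentral (Subring.center R) R :=
  ⟨fun z hz => ⟨⟨z, Subring.mem_center_iff.mpr (Subalgebra.mem_center_iff.mp hz)⟩, rfl⟩⟩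

noncomputable instance Subalgebra.centralizer.instDivisionRing {R D : Type*} [CommRing R]
    [DivisionRing D] [Algebra R D] (s : Set D) : DivisionRing (Subalgebra.centralizer R s) :=
  DivisionRing.ofIsUnitOrEqZero fun a => by
    rcases eq_or_ne a 0 with rfl | ha
    · exact .inr rfl
    refine .inl ⟨⟨a, ⟨(a : D)⁻¹, Set.inv_mem_centralizer₀ a.2⟩, ?_, ?_⟩, rfl⟩ <;>
      ext <;> simp [ha]

section IsCentral

variable {K D : Type*} [Field K] [DivisionRing D] [Algebra K D] [Algebra.IsCentral K D]

theorem eq_zero_of_forall_sum_mul_mul_eq_zero {ι : Type*} [Fintype ι] {a : ι → D}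
    (ha : LinearIndependent K a) {c : ι → D} (h : ∀ u, ∑ i, a i * u * c i = 0) : c = 0 := by
  classical
  induction hn : #{i | c i ≠ 0} using Nat.strong_induction_on generalizing c with
  | _ n ih =>
  by_contra hc
  obtain ⟨i₀, hi₀⟩ := Function.ne_iff.mp hc
  set c' : ι → D := fun i => c i * (c i₀)⁻¹
  have hc'i₀ : c' i₀ = 1 := mul_inv_cancel₀ hi₀
  have h' : ∀ u, ∑ i, a i * u * c' i = 0 := fun u => by
    simp only [c', ← mul_assoc, ← sum_mul, h, zero_mul]
  -- The commutators `c' i * v - v * c' i` satisfy the same relations and vanish at `i₀`,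
  -- so by minimality they vanish: every `c' i` is central.
  have hcomm : ∀ v i, v * c' i = c' i * v := by
    intro v
    have hrel : ∀ u, ∑ i, a i * u * (c' i * v - v * c' i) = 0 := fun u => calc
      _ = (∑ i, a i * u * c' i) * v - ∑ i, a i * (u * v) * c' i := by
        simp only [mul_sub, sum_sub_distrib, sum_mul, mul_assoc]
      _ = 0 := by rw [h', h', zero_mul, sub_zero]
    have hlt : #{i | c' i * v - v * c' i ≠ 0} < n := by
      refine hn ▸ card_lt_card (ssubset_iff_of_subset ?_ |>.mpr ⟨i₀, ?_, ?_⟩)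
      · intro j
        simp only [mem_filter, mem_univ, true_and, c']
        intro hj hcj
        simp [hcj] at hj
      · simpa using hi₀
      · simp [hc'i₀]
    intro i
    exact (sub_eq_zero.mp (congrFun (ih _ hlt hrel rfl) i)).symm
  choose k hk using fun i =>
    (Algebra.IsCentral.mem_center_iff K).mp (Subalgebra.mem_center_iff.mpr (hcomm · i))
  have hk0 := Fintype.linearIndependent_iff.mp ha k (by
    simpa [hk, Algebra.smul_def, Algebra.commutes] using h' 1) i₀
  exact one_ne_zero (by rw [← hc'i₀, hk, hk0, map_zero])

theorem linearIndependent_mul_mul {ι κ : Type*} [Fintype ι] [Fintype κ] {a : ι → D} {b : κ → D}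
    (ha : LinearIndependent K a) (hb : LinearIndependent K b) :
    LinearIndependent K fun p : ι × κ => fun u : D => a p.1 * u * b p.2 := by
  refine Fintype.linearIndependent_iff.mpr fun g hg p => ?_
  have hrow : (fun i => ∑ j, g (i, j) • b j) = 0 :=
    eq_zero_of_forall_sum_mul_mul_eq_zero ha fun u => by
      simpa [Fintype.sum_prod_type, mul_sum, mul_smul_comm] using congrFun hg u
  exact Fintype.linearIndependent_iff.mp hb _ (congrFun hrow p.1) p.2

theorem card_le_finrank_of_mul_smul_comm {E : Type*} [DivisionRing E] [Module E D]
    [IsScalarTower E D D] [SMulCommClass E K D] [Module.Finite E D] [FiniteDimensional K D]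
    {ι : Type*} [Fintype ι] {a : ι → D} (ha : LinearIndependent K a)
    (hcomm : ∀ i (c : E) (u : D), a i * (c • u) = c • (a i * u)) :
    Fintype.card ι ≤ finrank E D := by
  set b := Module.finBasis K D
  let φ : ι × Fin (finrank K D) → (D →ₗ[E] D) := fun p =>
    { toFun u := a p.1 * u * b p.2
      map_add' u v := by rw [mul_add, add_mul]
      map_smul' c u := by rw [hcomm, smul_mul_assoc]; rfl }
  have hφ : LinearIndependent K φ :=
    .of_comp (LinearMap.ltoFun E D D K) (linearIndependent_mul_mul ha b.linearIndependent)
  have hpos : 0 < finrank K D := Module.finrank_pos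
  have : Module.Finite K (D →ₗ[E] D) := Module.finite_of_finrank_pos (by
    rw [Module.finrank_linearMap]; exact Nat.mul_pos Module.finrank_pos hpos)
  have hcard := hφ.fintype_card_le_finrank
  rw [Module.finrank_linearMap, Fintype.card_prod, Fintype.card_fin] at hcard
  exact Nat.le_of_mul_le_mul_right hcard hpos

end IsCentral

/-- If `D` is a division ring with center `K = Z(D)` and `dim_K D = d ^ 2`, then every
element of `D` is algebraic over `K` of degree at most `d`: there is a nonzero polynomial
over `K` of degree at most `d` vanishing at `x`. -/
theorem algebraic_of_degree_le_of_dim_eq_sq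
    (D : Type*) [DivisionRing D] (d : ℕ)
    (hdim : Module.rank (Subring.center D) D = ((d ^ 2 : ℕ) : Cardinal)) (x : D) :
    ∃ p : Polynomial (Subring.center D), p ≠ 0 ∧ p.natDegree ≤ d ∧
      Polynomial.aeval x p = 0 := by
  set K := Subring.center D
  have : FiniteDimensional K D := .of_rank_eq_nat hdim
  set C := Subalgebra.centralizer K {x}
  have : Module.Finite C D := .of_restrictScalars_finite K C D
  have hxC : ∀ i : ℕ, x ^ i ∈ C := fun i =>
    pow_mem ((Subalgebra.mem_centralizer_iff K).mpr fun _ hg => hg ▸ rfl) i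
  set m := (minpoly K x).natDegree
  have hmC : m ≤ finrank K C := by
    have hpow : LinearIndependent K fun i : Fin m => (⟨x ^ (i : ℕ), hxC i⟩ : C) :=
      .of_comp C.val.toLinearMap (linearIndependent_pow x)
    simpa using hpow.fintype_card_le_finrank
  have hmD : m ≤ finrank C D := by
    simpa using card_le_finrank_of_mul_smul_comm (E := C) (linearIndependent_pow x)
      fun i c u => by
        have hxc : Commute x c := (Subalgebra.mem_centralizer_iff K).mp c.2 x rfl
        rw [Subalgebra.smul_def, Subalgebra.smul_def, smul_eq_mul, smul_eq_mul, ← mul_assoc,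
          (hxc.pow_left i).eq, mul_assoc]
  have hmm : m * m ≤ d * d := calc
    m * m ≤ finrank K C * finrank C D := Nat.mul_le_mul hmC hmD
    _ = d * d := by rw [Module.finrank_mul_finrank, Module.finrank_eq_of_rank_eq hdim, sq]
  exact ⟨minpoly K x, minpoly.ne_zero (.of_finite K x), Nat.mul_self_le_mul_self_iff.mp hmm,
    minpoly.aeval K x⟩
end
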